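/- Let β > 0, let v_1,…,v_N > 0 and ρ_1,…,ρ_N ∈ [0,1], and define f(η) = Σ_{i=1}^{N} v_i h(ρ_i,β,η) − Σ_{i=1}^{N} v_i ρ_i. If at least one ρ_i lies in the open interval (0,1), then f(0) > 0. -/

import Mathlib

/-- The tanh-based Heaviside projection. -/
noncomputable def heavisideProj (ρ β η : ℝ) : ℝ :=
  (Real.tanh (β * η) + Real.tanh (β * (ρ - η))) /
    (Real.tanh (β * η) + Real.tanh (β * (1 - η)))

/-!
At `η = 0` the projection is `h(ρ) = tanh (β ρ) / tanh β`. Since `tanh` is strictly concave on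
`[0, ∞)` and vanishes at `0`, its graph lies above the chord from `0` to `β`, i.e.
`tanh (ρ β) ≥ ρ tanh β` on `[0, 1]`, strictly on `(0, 1)`. Hence `h(ρᵢ) ≥ ρᵢ` for every element,
strictly for an intermediate density, and the weighted sums compare strictly.
-/

open Set

section Chord

variable {s : Set ℝ} {f : ℝ → ℝ} {x t : ℝ}

theorem ConcaveOn.mul_le_map_mul (hf : ConcaveOn ℝ s f) (h0 : 0 ∈ s) (hx : x ∈ s)
    (hf0 : f 0 = 0) (ht : t ∈ Icc 0 1) : t * f x ≤ f (t * x) := by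
  simpa [hf0] using hf.2 hx h0 ht.1 (sub_nonneg.2 ht.2) (add_sub_cancel t 1)

theorem StrictConcaveOn.mul_lt_map_mul (hf : StrictConcaveOn ℝ s f) (h0 : 0 ∈ s) (hx : x ∈ s)
    (hx0 : x ≠ 0) (hf0 : f 0 = 0) (ht : t ∈ Ioo 0 1) : t * f x < f (t * x) := by
  simpa [hf0] using hf.2 hx h0 hx0 ht.1 (sub_pos.2 ht.2) (add_sub_cancel t 1)

end Chord

namespace Real

theorem tanh_pos {x : ℝ} (hx : 0 < x) : 0 < tanh x := by
  rw [tanh_eq_sinh_div_cosh]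
  exact div_pos (sinh_pos_iff.2 hx) (cosh_pos x)

theorem hasDerivAt_tanh (x : ℝ) : HasDerivAt tanh (cosh x ^ 2)⁻¹ x := by
  have h := (hasDerivAt_sinh x).div (hasDerivAt_cosh x) (cosh_pos x).ne'
  rwa [← sq, ← sq, cosh_sq_sub_sinh_sq, one_div,
    show sinh / cosh = tanh from funext fun y => (tanh_eq_sinh_div_cosh y).symm] at h

theorem deriv_tanh : deriv tanh = fun x => (cosh x ^ 2)⁻¹ :=
  funext fun x => (hasDerivAt_tanh x).deriv

theorem continuous_tanh : Continuous tanh :=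
  continuous_iff_continuousAt.2 fun x => (hasDerivAt_tanh x).continuousAt

theorem strictConcaveOn_tanh : StrictConcaveOn ℝ (Ici 0) tanh := by
  refine StrictAntiOn.strictConcaveOn_of_deriv (convex_Ici 0) continuous_tanh.continuousOn ?_
  rw [interior_Ici, deriv_tanh]
  intro x hx y _ hxy
  have hcosh : cosh x < cosh y :=
    cosh_strictMonoOn (Ioi_subset_Ici_self hx) (Ioi_subset_Ici_self (lt_trans hx hxy)) hxy
  show (cosh y ^ 2)⁻¹ < (cosh x ^ 2)⁻¹
  gcongr

end Real

theorem le_heavisideProj_zero {ρ β : ℝ} (hβ : 0 < β) (hρ : ρ ∈ Icc 0 1) :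
    ρ ≤ heavisideProj ρ β 0 := by
  have h := Real.strictConcaveOn_tanh.concaveOn.mul_le_map_mul self_mem_Ici hβ.le
    Real.tanh_zero hρ
  simpa [heavisideProj, le_div_iff₀ (Real.tanh_pos hβ), mul_comm β] using h

theorem lt_heavisideProj_zero {ρ β : ℝ} (hβ : 0 < β) (hρ : ρ ∈ Ioo 0 1) :
    ρ < heavisideProj ρ β 0 := by
  have h := Real.strictConcaveOn_tanh.mul_lt_map_mul self_mem_Ici hβ.le hβ.ne'
    Real.tanh_zero hρ
  simpa [heavisideProj, lt_div_iff₀ (Real.tanh_pos hβ), mul_comm β] using h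

theorem volume_function_pos_at_zero (N : ℕ) (β : ℝ) (hβ : 0 < β)
    (v ρ : Fin N → ℝ) (hv : ∀ i, 0 < v i) (hρ : ∀ i, ρ i ∈ Set.Icc (0:ℝ) 1)
    (f : ℝ → ℝ)
    (hf : ∀ η, f η = (∑ i, v i * heavisideProj (ρ i) β η) - ∑ i, v i * ρ i)
    (hmid : ∃ i, ρ i ∈ Set.Ioo (0:ℝ) 1) :
    0 < f 0 := by
  obtain ⟨i₀, hi₀⟩ := hmid
  rw [hf, sub_pos]
  refine Finset.sum_lt_sum (fun i _ => ?_) ⟨i₀, Finset.mem_univ i₀, ?_⟩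
  · exact mul_le_mul_of_nonneg_left (le_heavisideProj_zero hβ (hρ i)) (hv i).le
  · exact mul_lt_mul_of_pos_left (lt_heavisideProj_zero hβ hi₀) (hv i₀)
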